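/- Let X = (0, 2) ⊂ ℝ with Lebesgue measure, and let f(x) = 0 for 0 < x ≤ 1 and f(x) = x - 1 for 1 < x < 2. Then for every x ∈ (0, 1), the uncentered Hardy–Littlewood maximal function satisfies M f(x) = 1 / (2(2 - x)). -/

import Mathlib

open MeasureTheory Set

/-- The uncentered Hardy–Littlewood maximal function of `g` on `X = (0, 2)`,
taken over open intervals `(τ, δ) ⊆ (0, 2)` containing `x`. -/
noncomputable def maxTwo (g : ℝ → ℝ) (x : ℝ) : ℝ :=
  sSup {v | ∃ a b : ℝ, 0 ≤ a ∧ a < b ∧ b ≤ 2 ∧ x ∈ Ioo a b ∧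
    v = ⨍ t in Ioo a b, |g t|}

/-- `f(x) = 0` for `0 < x ≤ 1` and `f(x) = x - 1` for `1 < x < 2`. -/
noncomputable def fTwo : ℝ → ℝ := fun x => if x ≤ 1 then 0 else x - 1

lemma fTwo_eq : fTwo = fun x => max (x - 1) 0 := by
  funext x
  unfold fTwo
  split_ifs with h
  · exact (max_eq_right (by linarith)).symm
  · exact (max_eq_left (by push_neg at h; linarith)).symm

lemma fTwo_cont : Continuous fTwo := by
  rw [fTwo_eq]; continuity

lemma abs_fTwo (x : ℝ) : |fTwo x| = fTwo x := by
  rw [fTwo_eq]; exact abs_of_nonneg (le_max_right _ _)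

open intervalIntegral in
lemma avg_eq (a b : ℝ) (hab : a < b) (ha1 : a ≤ 1) (h1b : 1 ≤ b) :
    ⨍ t in Ioo a b, |fTwo t| = (b - 1)^2 / (2 * (b - a)) := by
  have hInt : ∫ t in Ioo a b, |fTwo t| = (b - 1)^2 / 2 := by
    have h1 : ∫ t in Ioo a b, |fTwo t| = ∫ t in Ioo a b, fTwo t := by
      simp [abs_fTwo]
    have h2 : ∫ t in Ioo a b, fTwo t = ∫ t in a..b, fTwo t := by
      rw [intervalIntegral.integral_of_le hab.le, integral_Ioc_eq_integral_Ioo]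
    have h3 : ∫ t in a..b, fTwo t = (∫ t in a..(1:ℝ), fTwo t) + ∫ t in (1:ℝ)..b, fTwo t := by
      rw [intervalIntegral.integral_add_adjacent_intervals] <;>
        exact fTwo_cont.intervalIntegrable _ _
    have h4 : ∫ t in a..(1:ℝ), fTwo t = 0 := by
      rw [intervalIntegral.integral_congr (g := fun _ => (0:ℝ))]
      · simp
      · intro t ht
        rw [uIcc_of_le ha1] at ht
        unfold fTwo
        rw [if_pos ht.2]
    have h5 : ∫ t in (1:ℝ)..b, fTwo t = (b - 1)^2 / 2 := by
      rw [intervalIntegral.integral_congr (g := fun t => t - 1)]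
      · rw [intervalIntegral.integral_sub intervalIntegrable_id _root_.intervalIntegrable_const]
        rw [integral_id, intervalIntegral.integral_const]
        simp
        ring
      · intro t ht
        rw [uIcc_of_le h1b] at ht
        have h01 : (0:ℝ) ≤ t - 1 := by linarith [ht.1]
        simp [fTwo_eq, max_eq_left h01]
    rw [h1, h2, h3, h4, h5]; ring
  rw [setAverage_eq, hInt]
  rw [measureReal_def, Real.volume_Ioo, ENNReal.toReal_ofReal (by linarith)]
  simp only [smul_eq_mul]
  field_simp

lemma avg_zero (a b : ℝ) (hab : a < b) (hb1 : b ≤ 1) :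
    ⨍ t in Ioo a b, |fTwo t| = 0 := by
  have : ∫ t in Ioo a b, |fTwo t| = 0 := by
    apply setIntegral_eq_zero_of_forall_eq_zero
    intro t ht
    unfold fTwo
    rw [if_pos (by linarith [ht.2]), abs_zero]
  rw [setAverage_eq, this, smul_zero]

theorem stmt_6 (x : ℝ) (hx : x ∈ Ioo (0 : ℝ) 1) :
    maxTwo fTwo x = 1 / (2 * (2 - x)) := by
  obtain ⟨hx0, hx1⟩ := hx
  set S := {v | ∃ a b : ℝ, 0 ≤ a ∧ a < b ∧ b ≤ 2 ∧ x ∈ Ioo a b ∧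
    v = ⨍ t in Ioo a b, |fTwo t|} with hS
  have hub : ∀ v ∈ S, v ≤ 1 / (2 * (2 - x)) := by
    rintro v ⟨a, b, ha0, hab, hb2, ⟨hax, hxb⟩, rfl⟩
    by_cases hb1 : b ≤ 1
    · rw [avg_zero a b hab hb1]
      exact le_of_lt (div_pos one_pos (by linarith))
    · push_neg at hb1
      rw [avg_eq a b hab (by linarith) hb1.le]
      rw [div_le_div_iff₀ (by linarith) (by nlinarith)]
      have key : (b - 1)^2 * (2 - x) ≤ b - x := by
        nlinarith [mul_nonneg (by linarith : (0:ℝ) ≤ 2 - b)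
          (by nlinarith : (0:ℝ) ≤ b * (2 - x) - 1)]
      nlinarith
  have hBdd : BddAbove S := ⟨_, hub⟩
  have hne : S.Nonempty := by
    refine ⟨_, 0, 2, le_refl 0, by norm_num, le_refl 2, ⟨hx0, by linarith⟩, rfl⟩
  refine le_antisymm (csSup_le hne hub) ?_
  have hmem : ∀ a ∈ Ioo 0 x, 1 / (2 * (2 - a)) ∈ S := by
    intro a ⟨ha0, hax⟩
    refine ⟨a, 2, ha0.le, by linarith, le_refl 2, ⟨hax, by linarith⟩, ?_⟩
    rw [avg_eq a 2 (by linarith) (by linarith) (by norm_num)]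
    norm_num
  have htend : Filter.Tendsto (fun a : ℝ => 1 / (2 * (2 - a))) (nhdsWithin x (Iio x))
      (nhds (1 / (2 * (2 - x)))) := by
    apply Filter.Tendsto.mono_left _ nhdsWithin_le_nhds
    exact (ContinuousAt.div continuousAt_const (by fun_prop) (by nlinarith)).tendsto
  refine le_of_tendsto htend ?_
  filter_upwards [Ioo_mem_nhdsLT_of_mem (⟨hx0, le_refl x⟩ : x ∈ Ioc 0 x)] with a ha
  exact le_csSup hBdd (hmem a ha)
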